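/- For a set U of arcs {m,n} of the infinity-gon (pairs of integers with |n−m| ≥ 2, where {m₁,n₁} and {m₂,n₂} cross iff m₁<m₂<n₁<n₂ or m₂<m₁<n₂<n₁), U satisfies condition (i) (the Ptolemy condition: for crossing {m₁,n₁},{m₂,n₂} ∈ U, each of {m₁,m₂},{m₁,n₂},{n₁,m₂},{n₁,n₂} with coordinate gap ≥ 2 lies in U) if and only if the corresponding set of arcs in the strip, obtained via the index-reversing bijection φ from {ℓ_{p-i} : i ≥ 0} ∪ {r_{q+i} : i ≥ 0} onto the integers given by φ⁻¹(i+1) = ℓ_{p-i} and φ⁻¹(−i) = r_{q+i} for i ≥ 0, together with the connecting arc u = [ℓ_p, r_q], is a Ptolemy diagram of the strip. -/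
import Mathlib


/-- A marked point of the infinite strip `B∞`: an upper point `ℓ i` or a lower point `r j`. -/
inductive MPoint : Type
  | up : ℤ → MPoint
  | low : ℤ → MPoint
deriving DecidableEq

namespace Strip

open MPoint

/-- A curve is an unordered pair of marked points. -/
abbrev Curve := Sym2 MPoint

/-- Edges of the strip: `{ℓ_i, ℓ_{i+1}}` or `{r_i, r_{i+1}}`. -/
def IsEdge (c : Curve) : Prop :=
  ∃ i : ℤ, c = s(up i, up (i + 1)) ∨ c = s(low i, low (i + 1))

/-- Arcs: non-degenerate, non-edge unordered pairs of marked points. -/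
def IsArc (c : Curve) : Prop := ¬ c.IsDiag ∧ ¬ IsEdge c

/-- A connecting arc joins an upper and a lower marked point. -/
def IsConnecting (c : Curve) : Prop := ∃ i j : ℤ, c = s(up i, low j)

/-- The crossing relation on curves of the strip, given by the explicit index
conditions of Liu–Paquette (cases according to the type of `u`). -/
def Crosses (u v : Curve) : Prop :=
  (∃ i j p q : ℤ, ((i < p ∧ p < j ∧ j < q) ∨ (p < i ∧ i < q ∧ q < j)) ∧
      u = s(up i, up j) ∧ v = s(up p, up q)) ∨
  (∃ i j p q : ℤ, (i < p ∧ p < j) ∧ u = s(up i, up j) ∧ v = s(up p, low q)) ∨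
  (∃ i j p q : ℤ, ((i > p ∧ p > j ∧ j > q) ∨ (p > i ∧ i > q ∧ q > j)) ∧
      u = s(low i, low j) ∧ v = s(low p, low q)) ∨
  (∃ i j p q : ℤ, (i > q ∧ q > j) ∧ u = s(low i, low j) ∧ v = s(up p, low q)) ∨
  (∃ i j p q : ℤ, (p < i ∧ i < q) ∧ u = s(up i, low j) ∧ v = s(up p, up q)) ∨
  (∃ i j p q : ℤ, (p > j ∧ j > q) ∧ u = s(up i, low j) ∧ v = s(low p, low q)) ∨
  (∃ i j p q : ℤ, ((i > p ∧ j > q) ∨ (i < p ∧ j < q)) ∧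
      u = s(up i, low j) ∧ v = s(up p, low q))

/-- The translation `τ` on marked points, shifting indices by `+1`. -/
def tauP : MPoint → MPoint
  | up i => up (i + 1)
  | low i => low (i + 1)

/-- The inverse translation `τ⁻¹` on marked points. -/
def tauInvP : MPoint → MPoint
  | up i => up (i - 1)
  | low i => low (i - 1)

/-- The translation `τ` on curves. -/
def tau (c : Curve) : Curve := c.map tauP

/-- The inverse translation `τ⁻¹` on curves. -/
def tauInv (c : Curve) : Curve := c.map tauInvP

/-- `key p q` is the position of the curve `[p,q]` in the clockwise linear order `>_p`
on the set `[p,−]` of curves at `p`, valued in `ℤ ×ₗ ℤ` (lexicographic order).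
For `p = ℓ_P`: curves to upper points right of `p` (tier 2, increasing with index),
then connecting curves (tier 1, decreasing with index),
then curves to upper points left of `p` (tier 0, decreasing with index); dually for lower `p`. -/
def key : MPoint → MPoint → ℤ ×ₗ ℤ
  | up P, up e => if P < e then toLex (2, e) else toLex (0, -e)
  | up _, low c => toLex (1, -c)
  | low P, low e => if P < e then toLex (2, e) else toLex (0, -e)
  | low _, up c => toLex (1, -c)

/-- `GtAt p u v` means `u >_p v`: `u` and `v` are curves sharing the endpoint `p`
and `u` is bigger than `v` in the clockwise linear order at `p`. -/
def GtAt (p : MPoint) (u v : Curve) : Prop :=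
  ∃ x y : MPoint, x ≠ p ∧ y ≠ p ∧ u = s(p, x) ∧ v = s(p, y) ∧ key p y < key p x

/-- `u₃` is a middle term from `u₂` to `u₁`: a curve (arc or edge) with
`u₂ <_{p₁} u₃ <_{p₂} u₁` for some marked points `p₁`, `p₂`. -/
def IsMiddleTerm (u₂ u₁ u₃ : Curve) : Prop :=
  ¬ u₃.IsDiag ∧ ∃ p₁ p₂ : MPoint, GtAt p₁ u₃ u₂ ∧ GtAt p₂ u₁ u₃

/-- `nc T`: the set of arcs crossing no arc of `T`. -/
def nc (T : Set Curve) : Set Curve :=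
  {u | IsArc u ∧ ∀ v ∈ T, ¬ Crosses u v}

/-- `T` is a Ptolemy diagram: a set of arcs such that for any two crossing arcs
`[p,q],[i,j] ∈ T`, those of `[p,i],[p,j],[q,i],[q,j]` which are arcs lie in `T`. -/
def IsPtolemy (T : Set Curve) : Prop :=
  (∀ u ∈ T, IsArc u) ∧
  ∀ p q i j : MPoint, s(p, q) ∈ T → s(i, j) ∈ T → Crosses s(p, q) s(i, j) →
    (IsArc s(p, i) → s(p, i) ∈ T) ∧ (IsArc s(p, j) → s(p, j) ∈ T) ∧
    (IsArc s(q, i) → s(q, i) ∈ T) ∧ (IsArc s(q, j) → s(q, j) ∈ T)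

/-- `T_u`: the set of arcs of `T` crossing `u`. -/
def crossSet (T : Set Curve) (u : Curve) : Set Curve := {v ∈ T | Crosses v u}

/-- `p` is upper left `T`-bounded: `[p, ℓ_i] ∉ T` for all sufficiently small `i`. -/
def UpperLeftBounded (T : Set Curve) (p : MPoint) : Prop :=
  ∃ j : ℤ, ∀ i : ℤ, i < j → s(p, up i) ∉ T

/-- `p` is upper right `T`-bounded: `[p, ℓ_i] ∉ T` for all sufficiently large `i`. -/
def UpperRightBounded (T : Set Curve) (p : MPoint) : Prop :=
  ∃ j : ℤ, ∀ i : ℤ, i > j → s(p, up i) ∉ T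

/-- `p` is lower left `T`-bounded: `[p, r_i] ∉ T` for all sufficiently large `i`. -/
def LowerLeftBounded (T : Set Curve) (p : MPoint) : Prop :=
  ∃ j : ℤ, ∀ i : ℤ, i > j → s(p, low i) ∉ T

/-- `p` is lower right `T`-bounded: `[p, r_i] ∉ T` for all sufficiently small `i`. -/
def LowerRightBounded (T : Set Curve) (p : MPoint) : Prop :=
  ∃ j : ℤ, ∀ i : ℤ, i < j → s(p, low i) ∉ T

/-- Condition (B): every lower right `T`-bounded marked point is upper right
`T`-bounded, and every upper left `T`-bounded marked point is lower left `T`-bounded. -/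
def CondB (T : Set Curve) : Prop :=
  ∀ p : MPoint, (LowerRightBounded T p → UpperRightBounded T p) ∧
    (UpperLeftBounded T p → LowerLeftBounded T p)

/-- Condition (B'): the dual of condition (B). -/
def CondB' (T : Set Curve) : Prop :=
  ∀ p : MPoint, (LowerLeftBounded T p → UpperLeftBounded T p) ∧
    (UpperRightBounded T p → LowerRightBounded T p)

/-- Condition (C): `T ∪ nc T` contains a connecting arc. -/
def CondC (T : Set Curve) : Prop := ∃ c ∈ T ∪ nc T, IsConnecting c

/-- `S0` is a τ-basis of `Ω`: a subset of `Ω` such that for every `u₁ ∈ Ω` there is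
`u₂ ∈ S0` with `τ u₂` crossing `u₁`, and all middle terms from `u₂` to `u₁` lie in `Ω`
whenever `u₂` crosses `u₁`. -/
def IsTauBasis (Ω S0 : Set Curve) : Prop :=
  S0 ⊆ Ω ∧ ∀ u₁ ∈ Ω, ∃ u₂ ∈ S0, Crosses (tau u₂) u₁ ∧
    (Crosses u₂ u₁ → ∀ u₃ : Curve, IsMiddleTerm u₂ u₁ u₃ → u₃ ∈ Ω)

/-- `T` is τ-compact: for every arc `u`, the set `T_u` admits a finite τ-basis. -/
def TauCompact (T : Set Curve) : Prop :=
  ∀ u : Curve, IsArc u → ∃ S0 : Set Curve, S0.Finite ∧ IsTauBasis (crossSet T u) S0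

/-- `T̄`: the set `T` together with all edges of the strip. -/
def withEdges (T : Set Curve) : Set Curve := T ∪ {c | IsEdge c}

end Strip

namespace Strip

/-- Arcs of the infinity-gon: unordered pairs of integers with gap at least 2. -/
def IsNArc (c : Sym2 ℤ) : Prop := ∃ m n : ℤ, c = s(m, n) ∧ m + 2 ≤ n

/-- Crossing of arcs of the infinity-gon:
`{m₁,n₁}` and `{m₂,n₂}` cross iff `m₁<m₂<n₁<n₂` or `m₂<m₁<n₂<n₁`. -/
def NCross (u v : Sym2 ℤ) : Prop :=
  ∃ m₁ n₁ m₂ n₂ : ℤ, u = s(m₁, n₁) ∧ v = s(m₂, n₂) ∧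
    ((m₁ < m₂ ∧ m₂ < n₁ ∧ n₁ < n₂) ∨ (m₂ < m₁ ∧ m₁ < n₂ ∧ n₂ < n₁))

/-- Ng's condition (i) for a set of arcs of the infinity-gon. -/
def CondI (U : Set (Sym2 ℤ)) : Prop :=
  ∀ m₁ n₁ m₂ n₂ : ℤ, s(m₁, n₁) ∈ U → s(m₂, n₂) ∈ U →
    NCross s(m₁, n₁) s(m₂, n₂) →
      (IsNArc s(m₁, m₂) → s(m₁, m₂) ∈ U) ∧ (IsNArc s(m₁, n₂) → s(m₁, n₂) ∈ U) ∧
      (IsNArc s(n₁, m₂) → s(n₁, m₂) ∈ U) ∧ (IsNArc s(n₁, n₂) → s(n₁, n₂) ∈ U)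

/-- The bijection `φ⁻¹` from the integers to the marked points on the left of the
connecting arc `u = [ℓ_p, r_q]`: `φ⁻¹(i+1) = ℓ_{p-i}` and `φ⁻¹(-i) = r_{q+i}` for `i ≥ 0`. -/
def phiInv (p q : ℤ) : ℤ → MPoint :=
  fun k => if 1 ≤ k then MPoint.up (p - (k - 1)) else MPoint.low (q - k)

end Strip


namespace Strip

open MPoint

lemma mk_min_max (a b : ℤ) : s(a, b) = s(min a b, max a b) := by
  rcases le_total a b with h | h
  · rw [min_eq_left h, max_eq_right h]
  · rw [min_eq_right h, max_eq_left h]; exact Sym2.eq_swap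

lemma up_mk_min_max (a b : ℤ) : s(up a, up b) = s(up (min a b), up (max a b)) := by
  rcases le_total a b with h | h
  · rw [min_eq_left h, max_eq_right h]
  · rw [min_eq_right h, max_eq_left h]; exact Sym2.eq_swap

lemma low_mk_min_max (a b : ℤ) : s(low a, low b) = s(low (min a b), low (max a b)) := by
  rcases le_total a b with h | h
  · rw [min_eq_left h, max_eq_right h]
  · rw [min_eq_right h, max_eq_left h]; exact Sym2.eq_swap

lemma low_mk_max_min (a b : ℤ) : s(low a, low b) = s(low (max a b), low (min a b)) := by
  rw [low_mk_min_max]; exact Sym2.eq_swap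

lemma isNArc_iff (a b : ℤ) : IsNArc s(a, b) ↔ a + 2 ≤ b ∨ b + 2 ≤ a := by
  constructor
  · rintro ⟨m, n, h, hmn⟩
    rw [Sym2.eq_iff] at h
    omega
  · intro h
    rcases h with h | h
    exacts [⟨a, b, rfl, h⟩, ⟨b, a, Sym2.eq_swap, h⟩]

/-- Unordered interleaving of the pairs `{a,b}` and `{c,d}`. -/
def Itl (a b c d : ℤ) : Prop :=
  (min a b < min c d ∧ min c d < max a b ∧ max a b < max c d) ∨
  (min c d < min a b ∧ min a b < max c d ∧ max c d < max a b)

lemma ncross_iff (a b c d : ℤ) : NCross s(a, b) s(c, d) ↔ Itl a b c d := by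
  unfold Itl
  constructor
  · rintro ⟨m₁, n₁, m₂, n₂, h1, h2, h⟩
    rw [Sym2.eq_iff] at h1 h2
    rcases h1 with ⟨rfl, rfl⟩ | ⟨rfl, rfl⟩ <;> rcases h2 with ⟨rfl, rfl⟩ | ⟨rfl, rfl⟩ <;> omega
  · intro h
    exact ⟨min a b, max a b, min c d, max c d, mk_min_max a b, mk_min_max c d, by omega⟩

lemma phiInv_injective (p q : ℤ) : Function.Injective (phiInv p q) := by
  intro a b h
  unfold phiInv at h
  split_ifs at h <;> simp only [MPoint.up.injEq, MPoint.low.injEq, reduceCtorEq] at h <;> omega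

/-! ### Shape lemmas for `Crosses` -/

section ShapeLemmas

variable (i j P Q : ℤ)

lemma crosses_uu_uu : Crosses s(up i, up j) s(up P, up Q) ↔ Itl i j P Q := by
  unfold Itl
  constructor
  · rintro (⟨a,b,c,d,h,h1,h2⟩|⟨a,b,c,d,h,h1,h2⟩|⟨a,b,c,d,h,h1,h2⟩|⟨a,b,c,d,h,h1,h2⟩|
      ⟨a,b,c,d,h,h1,h2⟩|⟨a,b,c,d,h,h1,h2⟩|⟨a,b,c,d,h,h1,h2⟩) <;>
      simp only [Sym2.eq_iff, MPoint.up.injEq, MPoint.low.injEq, reduceCtorEq, and_false,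
        false_and, or_false, false_or, or_self] at h1 h2 <;>
      omega
  · intro h
    exact Or.inl ⟨min i j, max i j, min P Q, max P Q, by omega, up_mk_min_max i j,
      up_mk_min_max P Q⟩

lemma crosses_ll_ll : Crosses s(low i, low j) s(low P, low Q) ↔ Itl i j P Q := by
  unfold Itl
  constructor
  · rintro (⟨a,b,c,d,h,h1,h2⟩|⟨a,b,c,d,h,h1,h2⟩|⟨a,b,c,d,h,h1,h2⟩|⟨a,b,c,d,h,h1,h2⟩|
      ⟨a,b,c,d,h,h1,h2⟩|⟨a,b,c,d,h,h1,h2⟩|⟨a,b,c,d,h,h1,h2⟩) <;>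
      simp only [Sym2.eq_iff, MPoint.up.injEq, MPoint.low.injEq, reduceCtorEq, and_false,
        false_and, or_false, false_or, or_self] at h1 h2 <;>
      omega
  · intro h
    exact Or.inr (Or.inr (Or.inl ⟨max i j, min i j, max P Q, min P Q, by omega,
      low_mk_max_min i j, low_mk_max_min P Q⟩))

lemma crosses_uu_ll : ¬ Crosses s(up i, up j) s(low P, low Q) := by
  rintro (⟨a,b,c,d,h,h1,h2⟩|⟨a,b,c,d,h,h1,h2⟩|⟨a,b,c,d,h,h1,h2⟩|⟨a,b,c,d,h,h1,h2⟩|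
      ⟨a,b,c,d,h,h1,h2⟩|⟨a,b,c,d,h,h1,h2⟩|⟨a,b,c,d,h,h1,h2⟩) <;>
    simp only [Sym2.eq_iff, MPoint.up.injEq, MPoint.low.injEq, reduceCtorEq, and_false,
      false_and, or_false, false_or, or_self] at h1 h2

lemma crosses_ll_uu : ¬ Crosses s(low i, low j) s(up P, up Q) := by
  rintro (⟨a,b,c,d,h,h1,h2⟩|⟨a,b,c,d,h,h1,h2⟩|⟨a,b,c,d,h,h1,h2⟩|⟨a,b,c,d,h,h1,h2⟩|
      ⟨a,b,c,d,h,h1,h2⟩|⟨a,b,c,d,h,h1,h2⟩|⟨a,b,c,d,h,h1,h2⟩) <;>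
    simp only [Sym2.eq_iff, MPoint.up.injEq, MPoint.low.injEq, reduceCtorEq, and_false,
      false_and, or_false, false_or, or_self] at h1 h2

lemma crosses_uu_ul : Crosses s(up i, up j) s(up P, low Q) ↔
    min i j < P ∧ P < max i j := by
  constructor
  · rintro (⟨a,b,c,d,h,h1,h2⟩|⟨a,b,c,d,h,h1,h2⟩|⟨a,b,c,d,h,h1,h2⟩|⟨a,b,c,d,h,h1,h2⟩|
      ⟨a,b,c,d,h,h1,h2⟩|⟨a,b,c,d,h,h1,h2⟩|⟨a,b,c,d,h,h1,h2⟩) <;>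
      simp only [Sym2.eq_iff, MPoint.up.injEq, MPoint.low.injEq, reduceCtorEq, and_false,
        false_and, or_false, false_or, or_self] at h1 h2 <;>
      omega
  · intro h
    exact Or.inr (Or.inl ⟨min i j, max i j, P, Q, by omega, up_mk_min_max i j, rfl⟩)

lemma crosses_ll_ul : Crosses s(low i, low j) s(up P, low Q) ↔
    min i j < Q ∧ Q < max i j := by
  constructor
  · rintro (⟨a,b,c,d,h,h1,h2⟩|⟨a,b,c,d,h,h1,h2⟩|⟨a,b,c,d,h,h1,h2⟩|⟨a,b,c,d,h,h1,h2⟩|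
      ⟨a,b,c,d,h,h1,h2⟩|⟨a,b,c,d,h,h1,h2⟩|⟨a,b,c,d,h,h1,h2⟩) <;>
      simp only [Sym2.eq_iff, MPoint.up.injEq, MPoint.low.injEq, reduceCtorEq, and_false,
        false_and, or_false, false_or, or_self] at h1 h2 <;>
      omega
  · intro h
    exact Or.inr (Or.inr (Or.inr (Or.inl ⟨max i j, min i j, P, Q, by omega,
      low_mk_max_min i j, rfl⟩)))

lemma crosses_ul_uu : Crosses s(up i, low j) s(up P, up Q) ↔
    min P Q < i ∧ i < max P Q := by
  constructor
  · rintro (⟨a,b,c,d,h,h1,h2⟩|⟨a,b,c,d,h,h1,h2⟩|⟨a,b,c,d,h,h1,h2⟩|⟨a,b,c,d,h,h1,h2⟩|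
      ⟨a,b,c,d,h,h1,h2⟩|⟨a,b,c,d,h,h1,h2⟩|⟨a,b,c,d,h,h1,h2⟩) <;>
      simp only [Sym2.eq_iff, MPoint.up.injEq, MPoint.low.injEq, reduceCtorEq, and_false,
        false_and, or_false, false_or, or_self] at h1 h2 <;>
      omega
  · intro h
    exact Or.inr (Or.inr (Or.inr (Or.inr (Or.inl ⟨i, j, min P Q, max P Q, by omega, rfl,
      up_mk_min_max P Q⟩))))

lemma crosses_ul_ll : Crosses s(up i, low j) s(low P, low Q) ↔
    min P Q < j ∧ j < max P Q := by
  constructor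
  · rintro (⟨a,b,c,d,h,h1,h2⟩|⟨a,b,c,d,h,h1,h2⟩|⟨a,b,c,d,h,h1,h2⟩|⟨a,b,c,d,h,h1,h2⟩|
      ⟨a,b,c,d,h,h1,h2⟩|⟨a,b,c,d,h,h1,h2⟩|⟨a,b,c,d,h,h1,h2⟩) <;>
      simp only [Sym2.eq_iff, MPoint.up.injEq, MPoint.low.injEq, reduceCtorEq, and_false,
        false_and, or_false, false_or, or_self] at h1 h2 <;>
      omega
  · intro h
    exact Or.inr (Or.inr (Or.inr (Or.inr (Or.inr (Or.inl ⟨i, j, max P Q, min P Q, by omega,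
      rfl, low_mk_max_min P Q⟩)))))

lemma crosses_ul_ul : Crosses s(up i, low j) s(up P, low Q) ↔
    ((P < i ∧ Q < j) ∨ (i < P ∧ j < Q)) := by
  constructor
  · rintro (⟨a,b,c,d,h,h1,h2⟩|⟨a,b,c,d,h,h1,h2⟩|⟨a,b,c,d,h,h1,h2⟩|⟨a,b,c,d,h,h1,h2⟩|
      ⟨a,b,c,d,h,h1,h2⟩|⟨a,b,c,d,h,h1,h2⟩|⟨a,b,c,d,h,h1,h2⟩) <;>
      simp only [Sym2.eq_iff, MPoint.up.injEq, MPoint.low.injEq, reduceCtorEq, and_false,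
        false_and, or_false, false_or, or_self] at h1 h2 <;>
      omega
  · intro h
    exact Or.inr (Or.inr (Or.inr (Or.inr (Or.inr (Or.inr ⟨i, j, P, Q, by omega, rfl, rfl⟩)))))

/-! Derived lemmas with swapped representatives. -/

lemma sw (x y : ℤ) : s(low x, up y) = s(up y, low x) := Sym2.eq_swap

lemma crosses_lu_uu : Crosses s(low j, up i) s(up P, up Q) ↔
    min P Q < i ∧ i < max P Q := by rw [sw]; exact crosses_ul_uu i j P Q

lemma crosses_lu_ll : Crosses s(low j, up i) s(low P, low Q) ↔
    min P Q < j ∧ j < max P Q := by rw [sw]; exact crosses_ul_ll i j P Q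

lemma crosses_uu_lu : Crosses s(up i, up j) s(low Q, up P) ↔
    min i j < P ∧ P < max i j := by rw [sw]; exact crosses_uu_ul i j P Q

lemma crosses_ll_lu : Crosses s(low i, low j) s(low Q, up P) ↔
    min i j < Q ∧ Q < max i j := by rw [sw]; exact crosses_ll_ul i j P Q

lemma crosses_ul_lu : Crosses s(up i, low j) s(low Q, up P) ↔
    ((P < i ∧ Q < j) ∨ (i < P ∧ j < Q)) := by rw [sw]; exact crosses_ul_ul i j P Q

lemma crosses_lu_ul : Crosses s(low j, up i) s(up P, low Q) ↔
    ((P < i ∧ Q < j) ∨ (i < P ∧ j < Q)) := by rw [sw]; exact crosses_ul_ul i j P Q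

lemma crosses_lu_lu : Crosses s(low j, up i) s(low Q, up P) ↔
    ((P < i ∧ Q < j) ∨ (i < P ∧ j < Q)) := by rw [sw, sw]; exact crosses_ul_ul i j P Q

end ShapeLemmas

lemma crosses_phiInv (p q a b c d : ℤ) :
    Crosses s(phiInv p q a, phiInv p q b) s(phiInv p q c, phiInv p q d) ↔
      NCross s(a, b) s(c, d) := by
  rw [ncross_iff]
  unfold Itl phiInv
  split_ifs <;>
    simp only [crosses_uu_uu, crosses_ll_ll, crosses_uu_ul, crosses_ll_ul, crosses_ul_uu,
      crosses_ul_ll, crosses_ul_ul, crosses_lu_uu, crosses_lu_ll, crosses_uu_lu, crosses_ll_lu,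
      crosses_ul_lu, crosses_lu_ul, crosses_lu_lu, crosses_uu_ll, crosses_ll_uu,
      iff_false, false_iff, Itl] <;>
    omega

lemma isEdge_uu (i j : ℤ) : IsEdge s(up i, up j) ↔ j = i + 1 ∨ i = j + 1 := by
  constructor
  · rintro ⟨k, h | h⟩ <;>
      simp only [Sym2.eq_iff, MPoint.up.injEq, MPoint.low.injEq, reduceCtorEq, and_false,
        false_and, or_false, false_or, or_self] at h <;>
      omega
  · rintro (rfl | rfl)
    exacts [⟨i, Or.inl rfl⟩, ⟨j, Or.inl Sym2.eq_swap⟩]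

lemma isEdge_ll (i j : ℤ) : IsEdge s(low i, low j) ↔ j = i + 1 ∨ i = j + 1 := by
  constructor
  · rintro ⟨k, h | h⟩ <;>
      simp only [Sym2.eq_iff, MPoint.up.injEq, MPoint.low.injEq, reduceCtorEq, and_false,
        false_and, or_false, false_or, or_self] at h <;>
      omega
  · rintro (rfl | rfl)
    exacts [⟨i, Or.inr rfl⟩, ⟨j, Or.inr Sym2.eq_swap⟩]

lemma isEdge_ul (i j : ℤ) : ¬ IsEdge s(up i, low j) := by
  rintro ⟨k, h | h⟩ <;>
    simp only [Sym2.eq_iff, MPoint.up.injEq, MPoint.low.injEq, reduceCtorEq, and_false,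
      false_and, or_false, false_or, or_self] at h

lemma isEdge_lu (i j : ℤ) : ¬ IsEdge s(low j, up i) := by
  rw [sw]; exact isEdge_ul i j

lemma isArc_phiInv (p q a b : ℤ) : IsArc s(phiInv p q a, phiInv p q b) ↔
    (a + 2 ≤ b ∨ b + 2 ≤ a ∨ (a = 0 ∧ b = 1) ∨ (a = 1 ∧ b = 0)) := by
  unfold IsArc phiInv
  split_ifs <;>
    simp only [isEdge_uu, isEdge_ll, isEdge_ul, isEdge_lu, Sym2.mk_isDiag_iff,
      MPoint.up.injEq, MPoint.low.injEq, reduceCtorEq, not_false_iff, and_true, true_and,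
      not_or, not_false_eq_true, true_iff, iff_true, false_iff, iff_false] <;>
    omega

lemma mem_image_phiInv_iff (p q : ℤ) (V : Set (Sym2 ℤ)) (P Q : MPoint) :
    s(P, Q) ∈ Sym2.map (phiInv p q) '' V ↔
      ∃ a b : ℤ, s(a, b) ∈ V ∧ P = phiInv p q a ∧ Q = phiInv p q b := by
  constructor
  · rintro ⟨c, hc, hmap⟩
    induction c using Sym2.ind with
    | _ m n =>
      rw [Sym2.map_pair_eq, Sym2.eq_iff] at hmap
      rcases hmap with ⟨h1, h2⟩ | ⟨h1, h2⟩
      · exact ⟨m, n, hc, h1.symm, h2.symm⟩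
      · exact ⟨n, m, by rwa [Sym2.eq_swap], h2.symm, h1.symm⟩
  · rintro ⟨a, b, hab, rfl, rfl⟩
    exact ⟨s(a, b), hab, Sym2.map_pair_eq _ _ _⟩

lemma itl_not_01 (a b c d : ℤ) (h : Itl a b c d)
    (h01 : s(a, b) = s((1:ℤ), (0:ℤ)) ∨ s(c, d) = s((1:ℤ), (0:ℤ))) : False := by
  unfold Itl at h
  rcases h01 with h01 | h01 <;> rw [Sym2.eq_iff] at h01 <;> omega

lemma corner_mem (p q : ℤ) (U : Set (Sym2 ℤ)) (a c : ℤ)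
    (hkey : IsNArc s(a, c) → s(a, c) ∈ U)
    (harc : IsArc s(phiInv p q a, phiInv p q c)) :
    s(phiInv p q a, phiInv p q c) ∈ Sym2.map (phiInv p q) '' (U ∪ {s((1:ℤ), (0:ℤ))}) := by
  rw [isArc_phiInv] at harc
  rw [mem_image_phiInv_iff]
  refine ⟨a, c, ?_, rfl, rfl⟩
  have hsing : ∀ x y : ℤ, s(x, y) = s((1:ℤ), (0:ℤ)) →
      s(x, y) ∈ (U ∪ {s((1:ℤ), (0:ℤ))}) := by
    intro x y hxy
    exact Set.mem_union_right _ (by rwa [Set.mem_singleton_iff])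
  rcases harc with h | h | ⟨rfl, rfl⟩ | ⟨rfl, rfl⟩
  · exact Set.mem_union_left _ (hkey ((isNArc_iff a c).2 (Or.inl h)))
  · exact Set.mem_union_left _ (hkey ((isNArc_iff a c).2 (Or.inr h)))
  · exact hsing 0 1 Sym2.eq_swap
  · exact hsing 1 0 rfl

lemma mem_of_corner (p q : ℤ) (U : Set (Sym2 ℤ)) (m n : ℤ) (hN : IsNArc s(m, n))
    (hmem : s(phiInv p q m, phiInv p q n) ∈ Sym2.map (phiInv p q) '' (U ∪ {s((1:ℤ), (0:ℤ))})) :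
    s(m, n) ∈ U := by
  rw [mem_image_phiInv_iff] at hmem
  obtain ⟨a, b, hab, ha, hb⟩ := hmem
  cases phiInv_injective p q ha
  cases phiInv_injective p q hb
  rcases hab with hab | hab
  · exact hab
  · rw [Set.mem_singleton_iff, Sym2.eq_iff] at hab
    rw [isNArc_iff] at hN
    omega

end Strip

open Strip in
/-- A set `U` of arcs of the infinity-gon satisfies Ng's condition (i) iff the
corresponding set of arcs of the strip under `φ⁻¹`, together with the connecting
arc `u = [ℓ_p, r_q]`, is a Ptolemy diagram of the strip. -/
theorem condI_iff_ptolemy (p q : ℤ) (U : Set (Sym2 ℤ)) (hU : ∀ c ∈ U, IsNArc c) :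
    CondI U ↔
      IsPtolemy ((Sym2.map (phiInv p q)) '' U ∪ {s(MPoint.up p, MPoint.low q)}) := by
  have hup : MPoint.up p = phiInv p q 1 := by norm_num [phiInv]
  have hlow : MPoint.low q = phiInv p q 0 := by norm_num [phiInv]
  have himg : (Sym2.map (phiInv p q)) '' U ∪ {s(MPoint.up p, MPoint.low q)} =
      Sym2.map (phiInv p q) '' (U ∪ {s((1:ℤ), (0:ℤ))}) := by
    rw [Set.image_union, Set.image_singleton, Sym2.map_pair_eq, hup, hlow]
  rw [himg]
  constructor
  · -- Condition (i) implies Ptolemy.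
    intro hI
    constructor
    · rintro c ⟨d, hd, rfl⟩
      induction d using Sym2.ind with
      | _ m n =>
        rw [Sym2.map_pair_eq, isArc_phiInv]
        rcases hd with hd | hd
        · have := (isNArc_iff m n).1 (hU _ hd)
          omega
        · rw [Set.mem_singleton_iff, Sym2.eq_iff] at hd
          omega
    · intro P Q I J hPQ hIJ hcr
      rw [mem_image_phiInv_iff] at hPQ hIJ
      obtain ⟨a, b, hab, rfl, rfl⟩ := hPQ
      obtain ⟨c, d, hcd, rfl, rfl⟩ := hIJ
      rw [crosses_phiInv, ncross_iff] at hcr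
      rcases hab with hab | hab
      swap
      · exact (itl_not_01 a b c d hcr (Or.inl (Set.mem_singleton_iff.1 hab))).elim
      rcases hcd with hcd | hcd
      swap
      · exact (itl_not_01 a b c d hcr (Or.inr (Set.mem_singleton_iff.1 hcd))).elim
      have key := hI a b c d hab hcd ((ncross_iff a b c d).2 hcr)
      exact ⟨corner_mem p q U a c key.1, corner_mem p q U a d key.2.1,
        corner_mem p q U b c key.2.2.1, corner_mem p q U b d key.2.2.2⟩
  · -- Ptolemy implies condition (i).
    rintro ⟨-, hPt⟩ m₁ n₁ m₂ n₂ h1 h2 hcr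
    have h1' : s(phiInv p q m₁, phiInv p q n₁) ∈
        Sym2.map (phiInv p q) '' (U ∪ {s((1:ℤ), (0:ℤ))}) :=
      (mem_image_phiInv_iff p q _ _ _).2 ⟨m₁, n₁, Set.mem_union_left _ h1, rfl, rfl⟩
    have h2' : s(phiInv p q m₂, phiInv p q n₂) ∈
        Sym2.map (phiInv p q) '' (U ∪ {s((1:ℤ), (0:ℤ))}) :=
      (mem_image_phiInv_iff p q _ _ _).2 ⟨m₂, n₂, Set.mem_union_left _ h2, rfl, rfl⟩
    have key := hPt _ _ _ _ h1' h2' ((crosses_phiInv p q m₁ n₁ m₂ n₂).2 hcr)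
    have harc : ∀ x y : ℤ, IsNArc s(x, y) → IsArc s(phiInv p q x, phiInv p q y) := by
      intro x y hxy
      rw [isArc_phiInv]
      have := (isNArc_iff x y).1 hxy
      omega
    exact ⟨fun hN => mem_of_corner p q U _ _ hN (key.1 (harc _ _ hN)),
      fun hN => mem_of_corner p q U _ _ hN (key.2.1 (harc _ _ hN)),
      fun hN => mem_of_corner p q U _ _ hN (key.2.2.1 (harc _ _ hN)),
      fun hN => mem_of_corner p q U _ _ hN (key.2.2.2 (harc _ _ hN))⟩
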